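/- Let a = √((3−√5)/2), θ ∈ ℝ, and |φ⟩ = a(|01⟩ + |10⟩) + e^{iθ}√(1−2a²)|11⟩ ∈ ℂ² ⊗ ℂ². Let r_0,…,r_{m−1} and s_0,…,s_{n−1} be nonnegative reals each summing to 1, and let |ψ⟩ = Σ_{i,j} √(r_i s_j) |φ_{ij}⟩ ∈ ℂ^{2m} ⊗ ℂ^{2n}, where |φ_{ij}⟩ = a(|2i, 2j+1⟩ + |2i+1, 2j⟩) + e^{iθ}√(1−2a²)|2i+1, 2j+1⟩. Define the linear isometry Φ : ℂ^{2m} ⊗ ℂ² → ℂ^{2m} ⊗ ℂ² on basis vectors of the form |k⟩ ⊗ |0⟩ by Φ(|2k⟩ ⊗ |0⟩) = |2k⟩ ⊗ |0⟩ and Φ(|2k+1⟩ ⊗ |0⟩) = |2k⟩ ⊗ |1⟩ (and analogously on ℂ^{2n} ⊗ ℂ²). Then (Φ ⊗ Φ)(|ψ⟩ ⊗ |00⟩) = |σ⟩ ⊗ |φ⟩, where |σ⟩ = Σ_{i,j} √(r_i s_j) |2i, 2j⟩ ∈ ℂ^{2m} ⊗ ℂ^{2n} is a unit vector. In particular, any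 state of this form is equivalent up to local isometries (after appending local ancilla qubits in state |00⟩) to |σ⟩ ⊗ |φ⟩. -/
import Mathlib


open Matrix Complex
open scoped Kronecker

noncomputable section

/-- Hardy's amplitude `a = √((3 − √5)/2)`. -/
def aH : ℝ := Real.sqrt ((3 - Real.sqrt 5) / 2)

/-- The phase factor times `√(1 − 2a²)`. -/
def cH (θ : ℝ) : ℂ := Complex.exp (θ * Complex.I) * (Real.sqrt (1 - 2 * aH ^ 2) : ℝ)

/-- Hardy's two-qubit state `|φ⟩ = a(|01⟩ + |10⟩) + e^{iθ}√(1−2a²)|11⟩`. -/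
def phiH (θ : ℝ) : Fin 2 × Fin 2 → ℂ :=
  fun p => !![0, (aH : ℂ); (aH : ℂ), cH θ] p.1 p.2

/-- The basis index `2i + b` of `ℂ^{2m}`, for `i : Fin m` and `b : Fin 2`. -/
def pairIdx (m : ℕ) (i : Fin m) (b : Fin 2) : Fin (2 * m) :=
  ⟨2 * (i : ℕ) + (b : ℕ), by have := i.isLt; have := b.isLt; omega⟩

/-- The Hardy state in block `(i,j)`:
`|φ_{ij}⟩ = a(|2i,2j+1⟩ + |2i+1,2j⟩) + e^{iθ}√(1−2a²)|2i+1,2j+1⟩`. -/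
def hardyBlockVec (m n : ℕ) (θ : ℝ) (i : Fin m) (j : Fin n) :
    Fin (2 * m) × Fin (2 * n) → ℂ :=
  fun q =>
    if q = (pairIdx m i 0, pairIdx n j 1) then (aH : ℂ)
    else if q = (pairIdx m i 1, pairIdx n j 0) then (aH : ℂ)
    else if q = (pairIdx m i 1, pairIdx n j 1) then cH θ
    else 0

/-- The standard basis vector `|v⟩` of a finite-dimensional coordinate space. -/
def ketV {ι : Type*} [DecidableEq ι] (v : ι) : ι → ℂ := Pi.single v 1


lemma pairIdx_eq_iff {m : ℕ} {i i' : Fin m} {b b' : Fin 2} :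
    pairIdx m i b = pairIdx m i' b' ↔ i = i' ∧ b = b' := by
  have hb := b.isLt; have hb' := b'.isLt
  simp only [pairIdx, Fin.ext_iff, Fin.mk.injEq]
  omega

/-- Elementwise (Kronecker) product of two vectors on a product index type. -/
def vecK {α γ : Type*} (u : α → ℂ) (v : γ → ℂ) : α × γ → ℂ := fun p => u p.1 * v p.2

lemma kron_mulVec {α β γ δ : Type*} [Fintype β] [Fintype δ]
    (A : Matrix α β ℂ) (B : Matrix γ δ ℂ) (u : β → ℂ) (v : δ → ℂ) :
    (A ⊗ₖ B) *ᵥ vecK u v = vecK (A *ᵥ u) (B *ᵥ v) := by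
  funext q
  simp only [vecK, mulVec, dotProduct, kroneckerMap_apply, Fintype.sum_prod_type]
  rw [Finset.sum_mul_sum]
  exact Finset.sum_congr rfl fun x _ => Finset.sum_congr rfl fun y _ => by ring

lemma sum_dotProduct' {ι κ : Type*} [Fintype ι] [Fintype κ]
    (f : ι → κ → ℂ) (v : κ → ℂ) : (∑ i, f i) ⬝ᵥ v = ∑ i, f i ⬝ᵥ v := by
  simp only [dotProduct, Finset.sum_apply, Finset.sum_mul]
  exact Finset.sum_comm

lemma psi00_decomp (m n : ℕ) (θ : ℝ) (r : Fin m → ℝ) (s : Fin n → ℝ) :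
    (fun q : (Fin (2*m) × Fin 2) × (Fin (2*n) × Fin 2) =>
      if q.1.2 = 0 ∧ q.2.2 = 0 then
        (∑ i, ∑ j, (Real.sqrt (r i * s j) : ℂ) • hardyBlockVec m n θ i j) (q.1.1, q.2.1)
      else 0) =
    ∑ i, ∑ j, (Real.sqrt (r i * s j) : ℂ) •
      ((aH : ℂ) • vecK (ketV ((pairIdx m i 0, (0:Fin 2)))) (ketV ((pairIdx n j 1, (0:Fin 2))))
      + (aH : ℂ) • vecK (ketV ((pairIdx m i 1, (0:Fin 2)))) (ketV ((pairIdx n j 0, (0:Fin 2))))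
      + cH θ • vecK (ketV ((pairIdx m i 1, (0:Fin 2)))) (ketV ((pairIdx n j 1, (0:Fin 2))))) := by
  funext ⟨⟨x, b⟩, ⟨y, c⟩⟩
  simp only [Finset.sum_apply, Pi.smul_apply, Pi.add_apply, smul_eq_mul, vecK, ketV,
    Pi.single_apply, hardyBlockVec, Prod.mk.injEq, Prod.ext_iff]
  fin_cases b <;> fin_cases c <;> simp <;>
    exact Finset.sum_congr rfl fun i _ => Finset.sum_congr rfl fun j _ => by
      by_cases h1 : x = pairIdx m i 0 <;> by_cases h2 : x = pairIdx m i 1 <;>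
      by_cases h3 : y = pairIdx n j 0 <;> by_cases h4 : y = pairIdx n j 1 <;>
        simp_all [pairIdx_eq_iff]

lemma sigma_phi_decomp (m n : ℕ) (θ : ℝ) (r : Fin m → ℝ) (s : Fin n → ℝ) :
    (fun q : (Fin (2*m) × Fin 2) × (Fin (2*n) × Fin 2) =>
        ((∑ i, ∑ j, Pi.single ((pairIdx m i 0, pairIdx n j 0) : Fin (2*m) × Fin (2*n))
          ((Real.sqrt (r i * s j) : ℂ))) : Fin (2*m) × Fin (2*n) → ℂ) (q.1.1, q.2.1) *
        phiH θ (q.1.2, q.2.2)) =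
      ∑ i, ∑ j, (Real.sqrt (r i * s j) : ℂ) •
      ((aH : ℂ) • vecK (ketV ((pairIdx m i 0, (0:Fin 2)))) (ketV ((pairIdx n j 0, (1:Fin 2))))
      + (aH : ℂ) • vecK (ketV ((pairIdx m i 0, (1:Fin 2)))) (ketV ((pairIdx n j 0, (0:Fin 2))))
      + cH θ • vecK (ketV ((pairIdx m i 0, (1:Fin 2)))) (ketV ((pairIdx n j 0, (1:Fin 2))))) := by
  funext ⟨⟨x, b⟩, ⟨y, c⟩⟩
  simp only [Finset.sum_apply, Pi.smul_apply, Pi.add_apply, smul_eq_mul, vecK, ketV,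
    Pi.single_apply, Prod.mk.injEq, Prod.ext_iff, Finset.sum_mul]
  fin_cases b <;> fin_cases c <;>
    simp [phiH, Finset.sum_mul] <;>
    exact Finset.sum_congr rfl fun i _ => Finset.sum_congr rfl fun j _ => by
      by_cases h1 : x = pairIdx m i 0 <;> by_cases h3 : y = pairIdx n j 0 <;>
        simp_all [pairIdx_eq_iff]

set_option maxHeartbeats 1000000 in

/-- **Self-testing isometry for Hardy's test (Theorem 2):** for any state of the
form `|ψ⟩ = Σ_{i,j} √(r_i s_j)|φ_{ij}⟩`, appending local ancilla qubits in state
`|00⟩` and applying on each side an isometry `Φ` with `Φ(|2k⟩⊗|0⟩) = |2k⟩⊗|0⟩`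
and `Φ(|2k+1⟩⊗|0⟩) = |2k⟩⊗|1⟩` extracts Hardy's two-qubit state:
`(Φ_A ⊗ Φ_B)(|ψ⟩ ⊗ |00⟩) = |σ⟩ ⊗ |φ⟩`, with `|σ⟩ = Σ_{i,j} √(r_i s_j)|2i,2j⟩`
a unit vector. Isometries are represented by matrices `U` with `Uᴴ U = 1`;
Alice's system-plus-ancilla is the first tensor factor and Bob's the second. -/
theorem hardy_self_testing_isometry
    (m n : ℕ) (θ : ℝ)
    (r : Fin m → ℝ) (s : Fin n → ℝ)
    (hr : ∀ i, 0 ≤ r i) (hrsum : (∑ i, r i) = 1)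
    (hs : ∀ j, 0 ≤ s j) (hssum : (∑ j, s j) = 1)
    (ψ : Fin (2 * m) × Fin (2 * n) → ℂ)
    (hψ : ψ = ∑ i, ∑ j, (Real.sqrt (r i * s j) : ℂ) • hardyBlockVec m n θ i j)
    (ψ00 : (Fin (2 * m) × Fin 2) × (Fin (2 * n) × Fin 2) → ℂ)
    (hψ00 : ψ00 = fun q =>
      if q.1.2 = 0 ∧ q.2.2 = 0 then ψ (q.1.1, q.2.1) else 0)
    (UA : Matrix (Fin (2 * m) × Fin 2) (Fin (2 * m) × Fin 2) ℂ)
    (UB : Matrix (Fin (2 * n) × Fin 2) (Fin (2 * n) × Fin 2) ℂ)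
    (hUA : UAᴴ * UA = 1) (hUB : UBᴴ * UB = 1)
    (hUA0 : ∀ k : Fin m,
      UA *ᵥ ketV (pairIdx m k 0, (0 : Fin 2)) = ketV (pairIdx m k 0, (0 : Fin 2)))
    (hUA1 : ∀ k : Fin m,
      UA *ᵥ ketV (pairIdx m k 1, (0 : Fin 2)) = ketV (pairIdx m k 0, (1 : Fin 2)))
    (hUB0 : ∀ k : Fin n,
      UB *ᵥ ketV (pairIdx n k 0, (0 : Fin 2)) = ketV (pairIdx n k 0, (0 : Fin 2)))
    (hUB1 : ∀ k : Fin n,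
      UB *ᵥ ketV (pairIdx n k 1, (0 : Fin 2)) = ketV (pairIdx n k 0, (1 : Fin 2)))
    (σ : Fin (2 * m) × Fin (2 * n) → ℂ)
    (hσ : σ = ∑ i, ∑ j,
      Pi.single ((pairIdx m i 0, pairIdx n j 0) : Fin (2 * m) × Fin (2 * n))
        ((Real.sqrt (r i * s j) : ℂ))) :
    ((UA ⊗ₖ UB) *ᵥ ψ00 = fun q => σ (q.1.1, q.2.1) * phiH θ (q.1.2, q.2.2)) ∧
    star σ ⬝ᵥ σ = 1 := by
  constructor
  · rw [hψ00, hψ, hσ, psi00_decomp m n θ r s, sigma_phi_decomp m n θ r s]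
    rw [← Matrix.mulVecLin_apply, map_sum]
    refine Finset.sum_congr rfl fun i _ => ?_
    rw [map_sum]
    refine Finset.sum_congr rfl fun j _ => ?_
    rw [_root_.map_smul, map_add, map_add, _root_.map_smul, _root_.map_smul,
      _root_.map_smul, Matrix.mulVecLin_apply, Matrix.mulVecLin_apply,
      Matrix.mulVecLin_apply, kron_mulVec, kron_mulVec, kron_mulVec,
      hUA0, hUA1, hUB0, hUB1]
  · have hval : ∀ (i : Fin m) (j : Fin n),
        σ (pairIdx m i 0, pairIdx n j 0) = (Real.sqrt (r i * s j) : ℂ) := by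
      intro i j
      rw [hσ]
      simp [Finset.sum_apply, Pi.single_apply, Prod.ext_iff, pairIdx_eq_iff,
        ite_and, Finset.sum_ite_eq, Finset.sum_ite_eq']
    have hstar : star σ = σ := by
      rw [hσ]
      simp only [star_sum, ← Pi.single_star, Complex.star_def, Complex.conj_ofReal]
    rw [hstar]
    nth_rewrite 1 [hσ]
    rw [sum_dotProduct']
    calc (∑ i, (∑ j, Pi.single ((pairIdx m i 0, pairIdx n j 0) : Fin (2*m) × Fin (2*n))
            ((Real.sqrt (r i * s j) : ℂ))) ⬝ᵥ σ)
        = ∑ i, ∑ j, ((r i * s j : ℝ) : ℂ) := by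
          refine Finset.sum_congr rfl fun i _ => ?_
          rw [sum_dotProduct']
          refine Finset.sum_congr rfl fun j _ => ?_
          rw [single_dotProduct, hval i j, ← Complex.ofReal_mul,
            Real.mul_self_sqrt (mul_nonneg (hr i) (hs j))]
      _ = (((∑ i, r i) * (∑ j, s j) : ℝ) : ℂ) := by
          push_cast
          rw [Finset.sum_mul_sum]
      _ = 1 := by rw [hrsum, hssum]; norm_num
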